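/- arXiv:2602.03431 — 3 statements merged into one kernel-verified Lean document; each statement's English description precedes it below -/
import Mathlib

section
/- Let M ≡ 1 (mod 3) and let L_k, R_k be the defining-representation Pauli strings built from the free-fermions-in-disguise adjacency matrix A_M. Then L_1 L_4 L_7 ⋯ L_M = R_1 R_4 R_7 ⋯ R_M = X_1 Z_2 Z_3 X_4 Z_5 Z_6 ⋯ Z_{M−2} Z_{M−1} X_M, i.e. the representatives of the central elements h_1 h_4 ⋯ h_M and h̃_1 h̃_4 ⋯ h̃_M of the two commuting copies of the algebra coincide; in particular the defining representation of the tensor product of the two copies is not faithful for these M. -/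
noncomputable section

open scoped TensorProduct


/-- The defining relations of the graph-Clifford algebra associated to a symmetric
0/1 matrix `A` with zero diagonal. -/
inductive GCRel {M : ℕ} (A : Matrix (Fin M) (Fin M) ℤ) :
    FreeAlgebra ℂ (Fin M) → FreeAlgebra ℂ (Fin M) → Prop
  | sq (k : Fin M) : GCRel A (FreeAlgebra.ι ℂ k * FreeAlgebra.ι ℂ k) 1
  | comm (j k : Fin M) (hjk : j ≠ k) :
      GCRel A (FreeAlgebra.ι ℂ j * FreeAlgebra.ι ℂ k)
        (((-1 : ℂ) ^ (A j k)) • (FreeAlgebra.ι ℂ k * FreeAlgebra.ι ℂ j))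

/-- The graph-Clifford algebra `𝒜(A)`. -/
abbrev GC {M : ℕ} (A : Matrix (Fin M) (Fin M) ℤ) := RingQuot (GCRel A)

/-- The generator `h_k` of the graph-Clifford algebra. -/
def hgen {M : ℕ} (A : Matrix (Fin M) (Fin M) ℤ) (k : Fin M) : GC A :=
  RingQuot.mkAlgHom ℂ (GCRel A) (FreeAlgebra.ι ℂ k)

/-- The ordered product `g_S = h_{a_1} h_{a_2} ⋯ h_{a_n}` for a subset
`S = {a_1 < a_2 < ⋯ < a_n}` (with `g_∅ = 1`). -/
def gS {M : ℕ} (A : Matrix (Fin M) (Fin M) ℤ) (S : Finset (Fin M)) : GC A :=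
  ((S.sort (· ≤ ·)).map (hgen A)).prod
/-- The Pauli `X` operator acting on the `a`-th qubit of the `M`-qubit chain,
as a matrix in the computational basis indexed by bit strings `Fin M → Bool`. -/
def Xop {M : ℕ} (a : Fin M) : Matrix (Fin M → Bool) (Fin M → Bool) ℂ :=
  fun s t => if s = Function.update t a (!(t a)) then 1 else 0

/-- The product `∏_{j ∈ T} Z_j` of Pauli `Z` operators over the sites in `T`
(a diagonal matrix in the computational basis). -/
def Zstring {M : ℕ} (T : Finset (Fin M)) : Matrix (Fin M → Bool) (Fin M → Bool) ℂ :=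
  Matrix.diagonal (fun s => ∏ j ∈ T, (if s j then (-1 : ℂ) else 1))

/-- The left defining-representation Pauli string
`L_k = X_k · ∏_{j<k, A_{jk}=1} Z_j`. -/
def Lop {M : ℕ} (A : Matrix (Fin M) (Fin M) ℤ) (k : Fin M) :
    Matrix (Fin M → Bool) (Fin M → Bool) ℂ :=
  Xop k * Zstring (Finset.univ.filter (fun j => j < k ∧ A j k = 1))

/-- The right defining-representation Pauli string
`R_k = X_k · ∏_{j>k, A_{jk}=1} Z_j`. -/
def Rop {M : ℕ} (A : Matrix (Fin M) (Fin M) ℤ) (k : Fin M) :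
    Matrix (Fin M → Bool) (Fin M → Bool) ℂ :=
  Xop k * Zstring (Finset.univ.filter (fun j => k < j ∧ A j k = 1))

/-- The adjacency matrix (over `ℤ`) of the frustration graph of the
free-fermions-in-disguise model with open boundary conditions. -/
def ffdAZ (M : ℕ) : Matrix (Fin M) (Fin M) ℤ :=
  fun j k => if 1 ≤ ((j : ℤ) - (k : ℤ)).natAbs ∧ ((j : ℤ) - (k : ℤ)).natAbs ≤ 2 then 1 else 0

/-- The Pauli string `X_1 Z_2 Z_3 X_4 Z_5 Z_6 ⋯ Z_{M−2} Z_{M−1} X_M`: the ordered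
product over all sites with an `X` at the (1-indexed) sites `≡ 1 (mod 3)` and a `Z`
elsewhere. -/
def targetString (M : ℕ) : Matrix (Fin M → Bool) (Fin M → Bool) ℂ :=
  ((List.finRange M).map
    (fun i : Fin M => if (i : ℕ) % 3 = 0 then Xop i else Zstring ({i} : Finset (Fin M)))).prod



variable {M : ℕ}

/-! ### Pauli normal form -/

def eps (v t : Fin M → Bool) : ℂ := ∏ j, (if v j && t j then (-1 : ℂ) else 1)

def Pauli (u v : Fin M → Bool) : Matrix (Fin M → Bool) (Fin M → Bool) ℂ :=
  fun s t => if s = fun i => xor (u i) (t i) then eps v t else 0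

lemma eps_mul (v u' v' t : Fin M → Bool) :
    eps v (fun i => xor (u' i) (t i)) * eps v' t
      = eps v u' * eps (fun i => xor (v i) (v' i)) t := by
  unfold eps
  rw [← Finset.prod_mul_distrib, ← Finset.prod_mul_distrib]
  refine Finset.prod_congr rfl fun j _ => ?_
  have h : ∀ a b c d : Bool, (if a && (c ^^ d) then (-1:ℂ) else 1) * (if b && d then -1 else 1)
      = (if a && c then -1 else 1) * (if (a ^^ b) && d then -1 else 1) := by
    intro a b c d
    cases a <;> cases b <;> cases c <;> cases d <;> norm_num
  simpa using h (v j) (v' j) (u' j) (t j)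

lemma pauli_one :
    (Pauli (fun _ => false) (fun _ => false) : Matrix (Fin M → Bool) (Fin M → Bool) ℂ) = 1 := by
  ext s t
  simp [Pauli, eps, Matrix.one_apply]

lemma pauli_mul (u v u' v' : Fin M → Bool) :
    Pauli u v * Pauli u' v'
      = eps v u' • Pauli (fun i => xor (u i) (u' i)) (fun i => xor (v i) (v' i)) := by
  ext s t
  simp only [Matrix.mul_apply, Pauli, Matrix.smul_apply, smul_eq_mul]
  rw [Finset.sum_eq_single (fun i => xor (u' i) (t i))]
  · have hs : (s = fun i => xor (u i) (xor (u' i) (t i)))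
        ↔ (s = fun i => xor (xor (u i) (u' i)) (t i)) := by
      constructor <;> intro h <;> rw [h] <;> funext i <;> rw [Bool.xor_assoc]
    by_cases h : s = fun i => xor (u i) (xor (u' i) (t i))
    · rw [if_pos h, if_pos rfl, if_pos (hs.mp h), eps_mul]
    · rw [if_pos rfl, if_neg h, if_neg (fun hh => h (hs.mpr hh))]
      ring
  · intro r _ hr
    rw [if_neg hr, mul_zero]
  · intro h; exact absurd (Finset.mem_univ _) h

lemma eps_delta (v : Fin M → Bool) (k : Fin M) :
    eps v (fun i => decide (i = k)) = if v k then -1 else 1 := by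
  unfold eps
  rw [Finset.prod_eq_single k]
  · simp
  · intro j _ hj
    simp [hj]
  · intro h; exact absurd (Finset.mem_univ _) h

lemma eps_false_left (t : Fin M → Bool) : eps (fun _ => false) t = 1 := by
  simp [eps]

lemma eps_false_right (v : Fin M → Bool) : eps v (fun _ => false) = 1 := by
  simp [eps]


/-! ### The basic operators in Pauli normal form -/

lemma Xop_eq (a : Fin M) :
    Xop a = Pauli (fun i => decide (i = a)) (fun _ => false) := by
  ext s t
  have h : Function.update t a (!(t a)) = fun i => xor (decide (i = a)) (t i) := by
    funext i
    by_cases hi : i = a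
    · subst hi; simp
    · simp [Function.update_apply, hi]
  simp [Xop, Pauli, eps_false_left, h]

lemma Zstring_eq (T : Finset (Fin M)) :
    Zstring T = Pauli (fun _ => false) (fun i => decide (i ∈ T)) := by
  ext s t
  have h1 : (fun i => xor false (t i)) = t := by funext i; simp
  have h2 : eps (fun i => decide (i ∈ T)) t = ∏ j ∈ T, (if t j then (-1:ℂ) else 1) := by
    unfold eps
    rw [show (fun j => if decide (j ∈ T) && t j then (-1:ℂ) else 1)
        = fun j => if j ∈ T then (if t j then (-1:ℂ) else 1) else 1 from
      funext fun j => by by_cases hj : j ∈ T <;> simp [hj]]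
    rw [Finset.prod_ite_mem, Finset.univ_inter]
  simp only [Zstring, Pauli, Matrix.diagonal, Matrix.of_apply, h1, h2]
  by_cases h : s = t
  · subst h; simp
  · rw [if_neg h, if_neg h]

lemma Lop_eq (A : Matrix (Fin M) (Fin M) ℤ) (k : Fin M) :
    Lop A k = Pauli (fun i => decide (i = k)) (fun i => decide ((i < k ∧ A i k = 1))) := by
  rw [Lop, Xop_eq, Zstring_eq, pauli_mul, eps_false_left, one_smul]
  refine congr_arg₂ Pauli (funext fun i => by simp) (funext fun i => by
    simp only [Bool.false_xor]
    exact decide_eq_decide.mpr (by simp))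

lemma Rop_eq (A : Matrix (Fin M) (Fin M) ℤ) (k : Fin M) :
    Rop A k = Pauli (fun i => decide (i = k)) (fun i => decide ((k < i ∧ A i k = 1))) := by
  rw [Rop, Xop_eq, Zstring_eq, pauli_mul, eps_false_left, one_smul]
  refine congr_arg₂ Pauli (funext fun i => by simp) (funext fun i => by
    simp only [Bool.false_xor]
    exact decide_eq_decide.mpr (by simp))

/-! ### Products of Pauli strings supported on X-sites `≡ 0 mod 3`, Z-sites `≢ 0 mod 3` -/

lemma key_prod (l : List ((Fin M → Bool) × (Fin M → Bool)))
    (hX : ∀ p ∈ l, ∀ i : Fin M, p.1 i = true → (i : ℕ) % 3 = 0)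
    (hZ : ∀ p ∈ l, ∀ i : Fin M, p.2 i = true → (i : ℕ) % 3 ≠ 0)
    (hXd : l.Pairwise fun p q => ∀ i, ¬(p.1 i = true ∧ q.1 i = true))
    (hZd : l.Pairwise fun p q => ∀ i, ¬(p.2 i = true ∧ q.2 i = true)) :
    (l.map fun p => Pauli p.1 p.2).prod
      = Pauli (fun i => l.any fun p => p.1 i) (fun i => l.any fun p => p.2 i) := by
  induction l with
  | nil => simpa using pauli_one.symm
  | cons p l ih =>
    have hXc := List.pairwise_cons.mp hXd
    have hZc := List.pairwise_cons.mp hZd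
    rw [List.map_cons, List.prod_cons,
      ih (fun q hq => hX q (List.mem_cons_of_mem _ hq))
         (fun q hq => hZ q (List.mem_cons_of_mem _ hq)) hXc.2 hZc.2, pauli_mul]
    have hanyX : ∀ i : Fin M, (l.any fun q => q.1 i) = true → (i : ℕ) % 3 = 0 := by
      intro i hi
      obtain ⟨q, hq, hq1⟩ := List.any_eq_true.mp hi
      exact hX q (List.mem_cons_of_mem _ hq) i hq1
    have hsign : eps p.2 (fun i => l.any fun q => q.1 i) = 1 := by
      refine Finset.prod_eq_one fun j _ => ?_
      cases hp : p.2 j with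
      | false => simp [hp]
      | true =>
        have h3 := hZ p List.mem_cons_self j hp
        have : (l.any fun q => q.1 j) = false := by
          cases hq : (l.any fun q => q.1 j) with
          | false => rfl
          | true => exact absurd (hanyX j hq) h3
        simp [hp, this]
    rw [hsign, one_smul]
    refine congr_arg₂ Pauli (funext fun i => ?_) (funext fun i => ?_)
    · rw [List.any_cons]
      cases hp : p.1 i with
      | false => simp
      | true =>
        have : (l.any fun q => q.1 i) = false := by
          cases hq : (l.any fun q => q.1 i) with
          | false => rfl
          | true =>
            obtain ⟨q, hq', hq1⟩ := List.any_eq_true.mp hq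
            exact absurd ⟨hp, hq1⟩ (hXc.1 q hq' i)
        simp [this]
    · rw [List.any_cons]
      cases hp : p.2 i with
      | false => simp
      | true =>
        have : (l.any fun q => q.2 i) = false := by
          cases hq : (l.any fun q => q.2 i) with
          | false => rfl
          | true =>
            obtain ⟨q, hq', hq1⟩ := List.any_eq_true.mp hq
            exact absurd ⟨hp, hq1⟩ (hZc.1 q hq' i)
        simp [this]

/-- The generic sorted-product lemma. -/
lemma prod_sorted (v : Fin M → Fin M → Bool)
    (hv3 : ∀ k i : Fin M, (k : ℕ) % 3 = 0 → v k i = true → (i : ℕ) % 3 ≠ 0)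
    (hvd : ∀ k k' : Fin M, (k : ℕ) % 3 = 0 → (k' : ℕ) % 3 = 0 → k ≠ k' →
      ∀ i, ¬(v k i = true ∧ v k' i = true))
    (hvex : ∀ i : Fin M, (i : ℕ) % 3 ≠ 0 → ∃ k : Fin M, (k : ℕ) % 3 = 0 ∧ v k i = true) :
    (((Finset.univ.filter (fun j : Fin M => (j : ℕ) % 3 = 0)).sort (· ≤ ·)).map
        (fun k => Pauli (fun i => decide (i = k)) (v k))).prod
      = Pauli (fun i : Fin M => decide ((i : ℕ) % 3 = 0))
          (fun i : Fin M => decide ((i : ℕ) % 3 ≠ 0)) := by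
  set S := Finset.univ.filter (fun j : Fin M => (j : ℕ) % 3 = 0) with hS
  have hmem : ∀ k : Fin M, k ∈ S.sort (· ≤ ·) ↔ (k : ℕ) % 3 = 0 := by
    intro k
    rw [Finset.mem_sort, hS, Finset.mem_filter]
    simp
  have hrw : (fun k : Fin M => Pauli (fun i => decide (i = k)) (v k))
      = (fun p : (Fin M → Bool) × (Fin M → Bool) => Pauli p.1 p.2)
        ∘ (fun k : Fin M => ((fun i => decide (i = k)), v k)) := rfl
  rw [hrw, ← List.map_map, key_prod]
  · refine congr_arg₂ Pauli (funext fun i => ?_) (funext fun i => ?_)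
    · rw [Bool.eq_iff_iff]
      simp only [List.any_eq_true, List.mem_map, decide_eq_true_eq]
      constructor
      · rintro ⟨p, ⟨k, hk, rfl⟩, h⟩
        exact of_decide_eq_true h ▸ (hmem k).mp hk
      · intro hi
        exact ⟨_, ⟨i, (hmem i).mpr hi, rfl⟩, by simp⟩
    · rw [Bool.eq_iff_iff]
      simp only [List.any_eq_true, List.mem_map, decide_eq_true_eq]
      constructor
      · rintro ⟨p, ⟨k, hk, rfl⟩, h⟩
        exact hv3 k i ((hmem k).mp hk) h
      · intro hi
        obtain ⟨k, hk0, hkv⟩ := hvex i hi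
        exact ⟨_, ⟨k, (hmem k).mpr hk0, rfl⟩, hkv⟩
  · rintro p hp i hpi
    obtain ⟨k, hk, rfl⟩ := List.mem_map.mp hp
    exact of_decide_eq_true hpi ▸ (hmem k).mp hk
  · rintro p hp i hpi
    obtain ⟨k, hk, rfl⟩ := List.mem_map.mp hp
    exact hv3 k i ((hmem k).mp hk) hpi
  · refine List.Pairwise.map _ (fun {k k'} h => h) ?_
    refine List.Pairwise.imp_of_mem ?_ ((Finset.sort_nodup (s := S) (r := (· ≤ ·))) : List.Pairwise (· ≠ ·) _)
    intro k k' hk hk' hne i ⟨h1, h2⟩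
    exact hne ((of_decide_eq_true h1).symm.trans (of_decide_eq_true h2))
  · refine List.Pairwise.map _ (fun {k k'} h => h) ?_
    refine List.Pairwise.imp_of_mem ?_ ((Finset.sort_nodup (s := S) (r := (· ≤ ·))) : List.Pairwise (· ≠ ·) _)
    intro k k' hk hk' hne i hi
    exact hvd k k' ((hmem k).mp hk) ((hmem k').mp hk') hne i hi

/-! ### The three concrete products -/

lemma ffd_eq_one (i k : Fin M) :
    ffdAZ M i k = 1 ↔
      (((i:ℕ) < (k:ℕ) ∧ (k:ℕ) ≤ (i:ℕ) + 2) ∨ ((k:ℕ) < (i:ℕ) ∧ (i:ℕ) ≤ (k:ℕ) + 2)) := by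
  unfold ffdAZ
  split_ifs with h
  · constructor
    · intro _; omega
    · intro _; rfl
  · constructor
    · intro h0; exact absurd h0 (by norm_num)
    · intro h2; exact absurd (by omega : (1 ≤ ((i : ℤ) - (k : ℤ)).natAbs ∧ ((i : ℤ) - (k : ℤ)).natAbs ≤ 2)) h

lemma Lprod (hM : M % 3 = 1) :
    (((Finset.univ.filter (fun j : Fin M => (j : ℕ) % 3 = 0)).sort (· ≤ ·)).map
        (Lop (ffdAZ M))).prod
      = Pauli (fun i : Fin M => decide ((i : ℕ) % 3 = 0))
          (fun i : Fin M => decide ((i : ℕ) % 3 ≠ 0)) := by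
  rw [show Lop (ffdAZ M)
      = fun k => Pauli (fun i => decide (i = k)) (fun i => decide ((i < k ∧ ffdAZ M i k = 1)))
      from funext fun k => Lop_eq _ k]
  refine prod_sorted _ ?_ ?_ ?_
  · intro k i hk hv
    obtain ⟨hik, hA⟩ := of_decide_eq_true hv
    have h1 := (ffd_eq_one i k).mp hA
    have h2 : (i : ℕ) < (k : ℕ) := hik
    omega
  · rintro k k' hk hk' hne i ⟨h1, h2⟩
    obtain ⟨a1, b1⟩ := of_decide_eq_true h1
    obtain ⟨a2, b2⟩ := of_decide_eq_true h2
    have c1 := (ffd_eq_one i k).mp b1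
    have c2 := (ffd_eq_one i k').mp b2
    have d1 : (i : ℕ) < (k : ℕ) := a1
    have d2 : (i : ℕ) < (k' : ℕ) := a2
    exact hne (Fin.ext (by omega))
  · intro i hi
    have hiM : (i : ℕ) < M := i.isLt
    by_cases h1 : (i : ℕ) % 3 = 1
    · refine ⟨⟨(i : ℕ) + 2, by omega⟩, by simpa using (by omega : ((i:ℕ)+2) % 3 = 0), ?_⟩
      refine decide_eq_true ⟨?_, (ffd_eq_one _ _).mpr (Or.inl ⟨?_, ?_⟩)⟩
      · exact (by simp : (i:ℕ) < (i:ℕ) + 2)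
      · simp
      · simp
    · have h2 : (i : ℕ) % 3 = 2 := by omega
      refine ⟨⟨(i : ℕ) + 1, by omega⟩, by simpa using (by omega : ((i:ℕ)+1) % 3 = 0), ?_⟩
      refine decide_eq_true ⟨?_, (ffd_eq_one _ _).mpr (Or.inl ⟨?_, ?_⟩)⟩
      · exact (by simp : (i:ℕ) < (i:ℕ) + 1)
      · simp
      · simp

lemma Rprod (hM : M % 3 = 1) :
    (((Finset.univ.filter (fun j : Fin M => (j : ℕ) % 3 = 0)).sort (· ≤ ·)).map
        (Rop (ffdAZ M))).prod
      = Pauli (fun i : Fin M => decide ((i : ℕ) % 3 = 0))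
          (fun i : Fin M => decide ((i : ℕ) % 3 ≠ 0)) := by
  rw [show Rop (ffdAZ M)
      = fun k => Pauli (fun i => decide (i = k)) (fun i => decide ((k < i ∧ ffdAZ M i k = 1)))
      from funext fun k => Rop_eq _ k]
  refine prod_sorted _ ?_ ?_ ?_
  · intro k i hk hv
    obtain ⟨hik, hA⟩ := of_decide_eq_true hv
    have h1 := (ffd_eq_one i k).mp hA
    have h2 : (k : ℕ) < (i : ℕ) := hik
    omega
  · rintro k k' hk hk' hne i ⟨h1, h2⟩
    obtain ⟨a1, b1⟩ := of_decide_eq_true h1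
    obtain ⟨a2, b2⟩ := of_decide_eq_true h2
    have c1 := (ffd_eq_one i k).mp b1
    have c2 := (ffd_eq_one i k').mp b2
    have d1 : (k : ℕ) < (i : ℕ) := a1
    have d2 : (k' : ℕ) < (i : ℕ) := a2
    exact hne (Fin.ext (by omega))
  · intro i hi
    have hiM : (i : ℕ) < M := i.isLt
    by_cases h1 : (i : ℕ) % 3 = 1
    · refine ⟨⟨(i : ℕ) - 1, by omega⟩, by simpa using (by omega : ((i:ℕ)-1) % 3 = 0), ?_⟩
      refine decide_eq_true ⟨?_, (ffd_eq_one _ _).mpr (Or.inr ⟨?_, ?_⟩)⟩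
      · exact (by simp; omega : ((⟨(i:ℕ)-1, by omega⟩ : Fin M) : ℕ) < (i : ℕ))
      · simp; omega
      · simp; omega
    · have h2 : (i : ℕ) % 3 = 2 := by omega
      refine ⟨⟨(i : ℕ) - 2, by omega⟩, by simpa using (by omega : ((i:ℕ)-2) % 3 = 0), ?_⟩
      refine decide_eq_true ⟨?_, (ffd_eq_one _ _).mpr (Or.inr ⟨?_, ?_⟩)⟩
      · exact (by simp; omega : ((⟨(i:ℕ)-2, by omega⟩ : Fin M) : ℕ) < (i : ℕ))
      · simp; omega
      · simp; omega

/-- The auxiliary pair-valued function for the target string. -/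
def ptfun (M : ℕ) (i : Fin M) : (Fin M → Bool) × (Fin M → Bool) :=
  if (i : ℕ) % 3 = 0 then ((fun j => decide (j = i)), fun _ => false)
  else ((fun _ => false), fun j => decide (j = i))

lemma ptfun_fst {i j : Fin M} (h : (ptfun M i).1 j = true) : j = i ∧ (i : ℕ) % 3 = 0 := by
  by_cases h0 : (i : ℕ) % 3 = 0
  · rw [ptfun, if_pos h0] at h
    exact ⟨of_decide_eq_true h, h0⟩
  · rw [ptfun, if_neg h0] at h
    simp at h

lemma ptfun_snd {i j : Fin M} (h : (ptfun M i).2 j = true) : j = i ∧ (i : ℕ) % 3 ≠ 0 := by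
  by_cases h0 : (i : ℕ) % 3 = 0
  · rw [ptfun, if_pos h0] at h
    simp at h
  · rw [ptfun, if_neg h0] at h
    exact ⟨of_decide_eq_true h, h0⟩

lemma Tprod :
    targetString M
      = Pauli (fun i : Fin M => decide ((i : ℕ) % 3 = 0))
          (fun i : Fin M => decide ((i : ℕ) % 3 ≠ 0)) := by
  unfold targetString
  have hfun : (fun i : Fin M => if (i : ℕ) % 3 = 0 then Xop i else Zstring ({i} : Finset (Fin M)))
      = (fun p : (Fin M → Bool) × (Fin M → Bool) => Pauli p.1 p.2) ∘ ptfun M := by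
    funext i
    by_cases h : (i : ℕ) % 3 = 0
    · simp only [Function.comp, ptfun, if_pos h, Xop_eq]
    · simp only [Function.comp, ptfun, if_neg h, Zstring_eq]
      exact congr_arg _ (funext fun j => decide_eq_decide.mpr (Finset.mem_singleton))
  rw [hfun, ← List.map_map, key_prod]
  · refine congr_arg₂ Pauli (funext fun i => ?_) (funext fun i => ?_)
    · rw [Bool.eq_iff_iff]
      simp only [List.any_eq_true, List.mem_map, List.mem_finRange, decide_eq_true_eq]
      constructor
      · rintro ⟨p, ⟨j, _, rfl⟩, h⟩
        obtain ⟨rfl, h0⟩ := ptfun_fst h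
        exact h0
      · intro hi
        exact ⟨ptfun M i, ⟨i, trivial, rfl⟩, by simp [ptfun, hi]⟩
    · rw [Bool.eq_iff_iff]
      simp only [List.any_eq_true, List.mem_map, List.mem_finRange, decide_eq_true_eq]
      constructor
      · rintro ⟨p, ⟨j, _, rfl⟩, h⟩
        obtain ⟨rfl, h0⟩ := ptfun_snd h
        exact h0
      · intro hi
        exact ⟨ptfun M i, ⟨i, trivial, rfl⟩, by simp [ptfun, hi]⟩
  · rintro p hp i hpi
    obtain ⟨j, _, rfl⟩ := List.mem_map.mp hp
    obtain ⟨rfl, h0⟩ := ptfun_fst hpi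
    exact h0
  · rintro p hp i hpi
    obtain ⟨j, _, rfl⟩ := List.mem_map.mp hp
    obtain ⟨rfl, h0⟩ := ptfun_snd hpi
    exact h0
  · refine List.Pairwise.map _ (fun {j j'} h => h) ?_
    refine List.Pairwise.imp_of_mem ?_ ((List.nodup_finRange M) : List.Pairwise (· ≠ ·) _)
    intro j j' _ _ hne i ⟨h1, h2⟩
    exact hne ((ptfun_fst h1).1 ▸ (ptfun_fst h2).1 ▸ rfl)
  · refine List.Pairwise.map _ (fun {j j'} h => h) ?_
    refine List.Pairwise.imp_of_mem ?_ ((List.nodup_finRange M) : List.Pairwise (· ≠ ·) _)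
    intro j j' _ _ hne i ⟨h1, h2⟩
    exact hne ((ptfun_snd h1).1 ▸ (ptfun_snd h2).1 ▸ rfl)

/-! ### The algebra representation and non-faithfulness -/

lemma ffd_symm (j k : Fin M) : ffdAZ M j k = ffdAZ M k j := by
  unfold ffdAZ
  have h : ((j : ℤ) - (k : ℤ)).natAbs = ((k : ℤ) - (j : ℤ)).natAbs := by omega
  rw [h]

lemma ffd_cases (j k : Fin M) : ffdAZ M j k = 0 ∨ ffdAZ M j k = 1 := by
  unfold ffdAZ
  split_ifs <;> simp

lemma smul_pauli_congr (c c' : ℂ) (u v u' v' : Fin M → Bool) (hc : c = c')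
    (hu : ∀ i, u i = u' i) (hv : ∀ i, v i = v' i) :
    c • Pauli u v = c' • Pauli u' v' := by
  rw [hc]
  exact congr_arg _ (congr_arg₂ Pauli (funext hu) (funext hv))

lemma Lop_sq (k : Fin M) : Lop (ffdAZ M) k * Lop (ffdAZ M) k = 1 := by
  rw [Lop_eq, pauli_mul, eps_delta]
  simp only [Bool.xor_self, lt_self_iff_false, false_and, decide_false, Bool.false_eq_true,
    if_false, one_smul]
  exact pauli_one

lemma Lop_comm (j k : Fin M) (hjk : j ≠ k) :
    Lop (ffdAZ M) j * Lop (ffdAZ M) k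
      = ((-1 : ℂ) ^ (ffdAZ M j k)) • (Lop (ffdAZ M) k * Lop (ffdAZ M) j) := by
  simp only [Lop_eq, pauli_mul, eps_delta, smul_smul]
  refine smul_pauli_congr _ _ _ _ _ _ ?_ (fun i => Bool.xor_comm _ _)
    (fun i => Bool.xor_comm _ _)
  have h' : ffdAZ M k j = ffdAZ M j k := ffd_symm k j
  rcases ffd_cases j k with h0 | h0 <;> rcases lt_or_gt_of_ne hjk with hlt | hlt <;>
    rw [h0] at h' ⊢ <;> rw [h'] <;>
    norm_num [hlt, asymm hlt]

lemma Rop_sq (k : Fin M) : Rop (ffdAZ M) k * Rop (ffdAZ M) k = 1 := by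
  rw [Rop_eq, pauli_mul, eps_delta]
  simp only [Bool.xor_self, lt_self_iff_false, false_and, decide_false, Bool.false_eq_true,
    if_false, one_smul]
  exact pauli_one

lemma Rop_comm (j k : Fin M) (hjk : j ≠ k) :
    Rop (ffdAZ M) j * Rop (ffdAZ M) k
      = ((-1 : ℂ) ^ (ffdAZ M j k)) • (Rop (ffdAZ M) k * Rop (ffdAZ M) j) := by
  simp only [Rop_eq, pauli_mul, eps_delta, smul_smul]
  refine smul_pauli_congr _ _ _ _ _ _ ?_ (fun i => Bool.xor_comm _ _)
    (fun i => Bool.xor_comm _ _)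
  have h' : ffdAZ M k j = ffdAZ M j k := ffd_symm k j
  rcases ffd_cases j k with h0 | h0 <;> rcases lt_or_gt_of_ne hjk with hlt | hlt <;>
    rw [h0] at h' ⊢ <;> rw [h'] <;>
    norm_num [hlt, asymm hlt]

/-- The defining representation of the graph-Clifford algebra `𝒜(A_M)`. -/
def repL (M : ℕ) : GC (ffdAZ M) →ₐ[ℂ] Matrix (Fin M → Bool) (Fin M → Bool) ℂ :=
  RingQuot.liftAlgHom ℂ ⟨FreeAlgebra.lift ℂ (Lop (ffdAZ M)), by
    intro x y r
    induction r with
    | sq k =>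
      simp only [map_mul, map_one, FreeAlgebra.lift_ι_apply]
      exact Lop_sq k
    | comm j k hjk =>
      simp only [map_mul, map_smul, FreeAlgebra.lift_ι_apply]
      exact Lop_comm j k hjk⟩

lemma repL_hgen (k : Fin M) : repL M (hgen (ffdAZ M) k) = Lop (ffdAZ M) k := by
  rw [hgen, repL, RingQuot.liftAlgHom_mkAlgHom_apply, FreeAlgebra.lift_ι_apply]

lemma map_gS {A : Matrix (Fin M) (Fin M) ℤ} {B : Type} [Semiring B] [Algebra ℂ B]
    (φ : GC A →ₐ[ℂ] B) (S : Finset (Fin M)) :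
    φ (gS A S) = ((S.sort (· ≤ ·)).map (fun k => φ (hgen A k))).prod := by
  rw [gS, map_list_prod, List.map_map]
  rfl

open Kronecker in
/-- `X ↦ X ⊗ₖ 1` as an algebra homomorphism. -/
def kronL (ι : Type) [Fintype ι] [DecidableEq ι] :
    Matrix ι ι ℂ →ₐ[ℂ] Matrix (ι × ι) (ι × ι) ℂ where
  toFun := fun X => X ⊗ₖ (1 : Matrix ι ι ℂ)
  map_one' := Matrix.one_kronecker_one
  map_mul' := fun X Y => by rw [← Matrix.mul_kronecker_mul, one_mul]
  map_zero' := Matrix.zero_kronecker 1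
  map_add' := fun X Y => Matrix.add_kronecker X Y 1
  commutes' := fun c => by
    show Matrix.kroneckerMap (· * ·) ((algebraMap ℂ _) c) (1 : Matrix ι ι ℂ) = _
    rw [Algebra.algebraMap_eq_smul_one, Algebra.algebraMap_eq_smul_one,
      Matrix.smul_kronecker, Matrix.one_kronecker_one]

open Kronecker in
/-- `Y ↦ 1 ⊗ₖ Y` as an algebra homomorphism. -/
def kronR (ι : Type) [Fintype ι] [DecidableEq ι] :
    Matrix ι ι ℂ →ₐ[ℂ] Matrix (ι × ι) (ι × ι) ℂ where
  toFun := fun Y => (1 : Matrix ι ι ℂ) ⊗ₖ Y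
  map_one' := Matrix.one_kronecker_one
  map_mul' := fun X Y => by rw [← Matrix.mul_kronecker_mul, one_mul]
  map_zero' := Matrix.kronecker_zero 1
  map_add' := fun X Y => Matrix.kronecker_add 1 X Y
  commutes' := fun c => by
    show Matrix.kroneckerMap (· * ·) (1 : Matrix ι ι ℂ) ((algebraMap ℂ _) c) = _
    rw [Algebra.algebraMap_eq_smul_one, Algebra.algebraMap_eq_smul_one,
      Matrix.kronecker_smul, Matrix.one_kronecker_one]

/-- The common Pauli-string value. -/
def Ppat (M : ℕ) : Matrix (Fin M → Bool) (Fin M → Bool) ℂ :=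
  Pauli (fun i : Fin M => decide ((i : ℕ) % 3 = 0)) (fun i : Fin M => decide ((i : ℕ) % 3 ≠ 0))
/-- for `M ≡ 1 (mod 3)`, the ordered products `L_1 L_4 ⋯ L_M` and
`R_1 R_4 ⋯ R_M` of the defining-representation Pauli strings of the
free-fermions-in-disguise model (over the 1-indexed positions `≡ 1 (mod 3)`) both
equal `X_1 Z_2 Z_3 X_4 Z_5 Z_6 ⋯ Z_{M−2} Z_{M−1} X_M`; in particular the defining
representation of the tensor product of the two commuting copies of the algebra is
not faithful for these `M`. -/
theorem stmt17 (M : ℕ) (hM : M % 3 = 1) :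
    ((((Finset.univ.filter (fun j : Fin M => (j : ℕ) % 3 = 0)).sort (· ≤ ·)).map
        (Lop (ffdAZ M))).prod = targetString M) ∧
    ((((Finset.univ.filter (fun j : Fin M => (j : ℕ) % 3 = 0)).sort (· ≤ ·)).map
        (Rop (ffdAZ M))).prod = targetString M) ∧
    (∀ ρ : (GC (ffdAZ M) ⊗[ℂ] GC (ffdAZ M)) →ₐ[ℂ] Matrix (Fin M → Bool) (Fin M → Bool) ℂ,
      (∀ k : Fin M, ρ (hgen (ffdAZ M) k ⊗ₜ[ℂ] 1) = Lop (ffdAZ M) k) →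
      (∀ k : Fin M, ρ (1 ⊗ₜ[ℂ] hgen (ffdAZ M) k) = Rop (ffdAZ M) k) →
      ¬ Function.Injective ρ) := by
  have hT := Tprod (M := M)
  refine ⟨(Lprod hM).trans hT.symm, (Rprod hM).trans hT.symm, ?_⟩
  intro ρ hρL hρR hinj
  classical
  have hx : ρ ((gS (ffdAZ M) (Finset.univ.filter (fun j : Fin M => (j : ℕ) % 3 = 0))) ⊗ₜ[ℂ] (1 : GC (ffdAZ M))) = Ppat M := by
    rw [show (gS (ffdAZ M) (Finset.univ.filter (fun j : Fin M => (j : ℕ) % 3 = 0))) ⊗ₜ[ℂ] (1 : GC (ffdAZ M))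
        = (Algebra.TensorProduct.includeLeft : GC (ffdAZ M) →ₐ[ℂ] GC (ffdAZ M) ⊗[ℂ] GC (ffdAZ M)) (gS (ffdAZ M) (Finset.univ.filter (fun j : Fin M => (j : ℕ) % 3 = 0))) from
      (Algebra.TensorProduct.includeLeft_apply (gS (ffdAZ M) (Finset.univ.filter (fun j : Fin M => (j : ℕ) % 3 = 0)))).symm]
    rw [← AlgHom.comp_apply, map_gS]
    have h2 : (fun k => (ρ.comp
        (Algebra.TensorProduct.includeLeft : GC (ffdAZ M) →ₐ[ℂ] GC (ffdAZ M) ⊗[ℂ] GC (ffdAZ M))) (hgen (ffdAZ M) k))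
        = Lop (ffdAZ M) := by
      funext k
      rw [AlgHom.comp_apply, Algebra.TensorProduct.includeLeft_apply]
      exact hρL k
    rw [h2]
    exact Lprod hM
  have hy : ρ ((1 : GC (ffdAZ M)) ⊗ₜ[ℂ] (gS (ffdAZ M) (Finset.univ.filter (fun j : Fin M => (j : ℕ) % 3 = 0)))) = Ppat M := by
    rw [show (1 : GC (ffdAZ M)) ⊗ₜ[ℂ] (gS (ffdAZ M) (Finset.univ.filter (fun j : Fin M => (j : ℕ) % 3 = 0)))
        = (Algebra.TensorProduct.includeRight : GC (ffdAZ M) →ₐ[ℂ] GC (ffdAZ M) ⊗[ℂ] GC (ffdAZ M)) (gS (ffdAZ M) (Finset.univ.filter (fun j : Fin M => (j : ℕ) % 3 = 0))) from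
      (Algebra.TensorProduct.includeRight_apply (gS (ffdAZ M) (Finset.univ.filter (fun j : Fin M => (j : ℕ) % 3 = 0)))).symm]
    rw [← AlgHom.comp_apply, map_gS]
    have h2 : (fun k => (ρ.comp
        (Algebra.TensorProduct.includeRight : GC (ffdAZ M) →ₐ[ℂ] GC (ffdAZ M) ⊗[ℂ] GC (ffdAZ M))) (hgen (ffdAZ M) k))
        = Rop (ffdAZ M) := by
      funext k
      rw [AlgHom.comp_apply, Algebra.TensorProduct.includeRight_apply]
      exact hρR k
    rw [h2]
    exact Rprod hM
  have hxy : (gS (ffdAZ M) (Finset.univ.filter (fun j : Fin M => (j : ℕ) % 3 = 0))) ⊗ₜ[ℂ] (1 : GC (ffdAZ M)) = (1 : GC (ffdAZ M)) ⊗ₜ[ℂ] (gS (ffdAZ M) (Finset.univ.filter (fun j : Fin M => (j : ℕ) % 3 = 0))) := hinj (hx.trans hy.symm)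
  have hcomm : ∀ x y : GC (ffdAZ M), Commute (((kronL (Fin M → Bool)).comp (repL M)) x)
      (((kronR (Fin M → Bool)).comp (repL M)) y) := by
    intro x y
    show ((kronL (Fin M → Bool)).comp (repL M)) x * ((kronR (Fin M → Bool)).comp (repL M)) y
      = ((kronR (Fin M → Bool)).comp (repL M)) y * ((kronL (Fin M → Bool)).comp (repL M)) x
    show Matrix.kroneckerMap (· * ·) (repL M x) 1 * Matrix.kroneckerMap (· * ·) 1 (repL M y)
      = Matrix.kroneckerMap (· * ·) 1 (repL M y) * Matrix.kroneckerMap (· * ·) (repL M x) 1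
    rw [← Matrix.mul_kronecker_mul, ← Matrix.mul_kronecker_mul, one_mul, mul_one, one_mul,
      mul_one]
  set F := Algebra.TensorProduct.lift ((kronL (Fin M → Bool)).comp (repL M))
    ((kronR (Fin M → Bool)).comp (repL M)) hcomm with hF
  have hrepgS : repL M (gS (ffdAZ M) (Finset.univ.filter (fun j : Fin M => (j : ℕ) % 3 = 0))) = Ppat M := by
    rw [map_gS, show (fun k => repL M (hgen (ffdAZ M) k)) = Lop (ffdAZ M) from funext (fun k => repL_hgen k)]
    exact Lprod hM
  have hFx : F ((gS (ffdAZ M) (Finset.univ.filter (fun j : Fin M => (j : ℕ) % 3 = 0))) ⊗ₜ[ℂ] (1 : GC (ffdAZ M)))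
      = Matrix.kroneckerMap (· * ·) (Ppat M) (1 : Matrix (Fin M → Bool) (Fin M → Bool) ℂ) := by
    rw [hF, Algebra.TensorProduct.lift_tmul, map_one, mul_one, AlgHom.comp_apply, hrepgS]
    rfl
  have hFy : F ((1 : GC (ffdAZ M)) ⊗ₜ[ℂ] (gS (ffdAZ M) (Finset.univ.filter (fun j : Fin M => (j : ℕ) % 3 = 0))))
      = Matrix.kroneckerMap (· * ·) (1 : Matrix (Fin M → Bool) (Fin M → Bool) ℂ) (Ppat M) := by
    rw [hF, Algebra.TensorProduct.lift_tmul, map_one, one_mul, AlgHom.comp_apply, hrepgS]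
    rfl
  rw [hxy] at hFx
  have hbad := hFx.symm.trans hFy
  have hval := congr_fun (congr_fun hbad
    ((fun i : Fin M => decide ((i : ℕ) % 3 = 0)), fun _ => false)) ((fun _ => false), (fun _ => false))
  rw [Matrix.kroneckerMap_apply, Matrix.kroneckerMap_apply] at hval
  have hne : (fun i : Fin M => decide ((i : ℕ) % 3 = 0)) ≠ (fun _ => false) := by
    intro h
    have h0 := congr_fun h ⟨0, by omega⟩
    simp at h0
  have e1 : Ppat M (fun i : Fin M => decide ((i : ℕ) % 3 = 0)) (fun _ => false) = 1 := by
    rw [Ppat, Pauli, if_pos (funext fun i => by simp), eps_false_right]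
  have e2 : (1 : Matrix (Fin M → Bool) (Fin M → Bool) ℂ) (fun _ => false) (fun _ => false) = 1 :=
    Matrix.one_apply_eq _
  have e3 : (1 : Matrix (Fin M → Bool) (Fin M → Bool) ℂ)
      (fun i : Fin M => decide ((i : ℕ) % 3 = 0)) (fun _ => false) = 0 :=
    Matrix.one_apply_ne hne
  rw [e1, e2, e3, one_mul, zero_mul] at hval
  exact one_ne_zero hval

end
end

section
/- For every N ≥ 1, every M ≥ N+2, and every vector v ∈ ℂ², the translationally invariant product state v^{⊗M} ∈ (ℂ²)^{⊗M} is a null vector of the periodic anti-symmetric Hamiltonian: H_A^{(N)} · v^{⊗M} = 0. Consequently (by differentiating the product state (1, a)^{⊗M} with respect to a), every Dicke state |D_n^{(M)}⟩ = Σ_{s ∈ {0,1}^M, |s| = n} |s⟩, for 0 ≤ n ≤ M, also satisfies H_A^{(N)} |D_n^{(M)}⟩ = 0. -/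
noncomputable section

/-- The Pauli `X` operator acting on site `a` of the periodic `M`-site chain,
as a matrix in the computational basis indexed by bit strings `ZMod M → Bool`. -/
def Xcyc {M : ℕ} [NeZero M] (a : ZMod M) :
    Matrix (ZMod M → Bool) (ZMod M → Bool) ℂ :=
  fun s t => if s = Function.update t a (!(t a)) then 1 else 0

/-- The product `∏_{j ∈ T} Z_j` of Pauli `Z` operators over the sites in `T`. -/
def Zcyc {M : ℕ} [NeZero M] (T : Finset (ZMod M)) :
    Matrix (ZMod M → Bool) (ZMod M → Bool) ℂ :=
  Matrix.diagonal (fun s => ∏ j ∈ T, (if s j then (-1 : ℂ) else 1))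

/-- The periodic anti-symmetric Hamiltonian
`H_A^{(N)} = Σ_{j=1}^M (Z_j Z_{j+1} ⋯ Z_{j+N−1} X_{j+N} − X_j Z_{j+1} ⋯ Z_{j+N})`,
with all site indices taken modulo `M`. -/
def HAper (M N : ℕ) [NeZero M] : Matrix (ZMod M → Bool) (ZMod M → Bool) ℂ :=
  ∑ j : ZMod M,
    (Zcyc (Finset.image (fun i : Fin N => j + ((i : ℕ) : ZMod M)) Finset.univ) *
        Xcyc (j + (N : ZMod M)) -
      Xcyc j *
        Zcyc (Finset.image (fun i : Fin N => j + ((i : ℕ) : ZMod M) + 1) Finset.univ))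

/-- The translationally invariant product state `v^{⊗M}`. -/
def prodState (M : ℕ) [NeZero M] (v : Bool → ℂ) : (ZMod M → Bool) → ℂ :=
  fun s => ∏ a : ZMod M, v (s a)

/-- The (unnormalized) Dicke state with `n` down spins: the sum of all computational
basis states with exactly `n` ones. -/
def dicke (M : ℕ) [NeZero M] (n : ℕ) : (ZMod M → Bool) → ℂ :=
  fun s => if (Finset.univ.filter (fun a : ZMod M => s a = true)).card = n then 1 else 0

-- AUX
lemma aux_sum_mulVec {ι n : Type*} [Fintype n] [DecidableEq n] [Fintype ι]
    (A : ι → Matrix n n ℂ) (v : n → ℂ) (x : n) :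
    (∑ j, A j).mulVec v x = ∑ j, (A j).mulVec v x := by
  simp only [Matrix.mulVec, dotProduct, Matrix.sum_apply, Finset.sum_mul]
  rw [Finset.sum_comm]

lemma aux_flip_eq_iff {M : ℕ} [NeZero M] (a : ZMod M) (s t : ZMod M → Bool) :
    s = Function.update t a (!(t a)) ↔ t = Function.update s a (!(s a)) := by
  have h : ∀ u : ZMod M → Bool,
      Function.update (Function.update u a (!(u a))) a
        (!((Function.update u a (!(u a))) a)) = u := by
    intro u
    funext b
    rcases eq_or_ne b a with rfl | hb
    · simp
    · simp [Function.update_of_ne hb]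
  constructor
  · rintro rfl
    exact (h t).symm
  · rintro rfl
    exact (h s).symm

lemma aux_Xcyc_mulVec {M : ℕ} [NeZero M] (a : ZMod M) (ψ : (ZMod M → Bool) → ℂ)
    (s : ZMod M → Bool) :
    (Xcyc a).mulVec ψ s = ψ (Function.update s a (!(s a))) := by
  classical
  simp only [Xcyc, Matrix.mulVec, dotProduct]
  have : ∀ t : ZMod M → Bool,
      (if s = Function.update t a (!(t a)) then (1:ℂ) else 0) * ψ t
        = if t = Function.update s a (!(s a)) then ψ t else 0 := by
    intro t
    by_cases hcond : t = Function.update s a (!(s a))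
    · rw [if_pos ((aux_flip_eq_iff a s t).mpr hcond), if_pos hcond, one_mul]
    · rw [if_neg (fun hh => hcond ((aux_flip_eq_iff a s t).mp hh)), if_neg hcond, zero_mul]
  rw [Finset.sum_congr rfl fun t _ => this t, Finset.sum_ite_eq']
  simp

lemma aux_ZX_mulVec {M : ℕ} [NeZero M] (T : Finset (ZMod M)) (a : ZMod M)
    (ψ : (ZMod M → Bool) → ℂ) (s : ZMod M → Bool) :
    (Zcyc T * Xcyc a).mulVec ψ s =
      (∏ j ∈ T, if s j then (-1:ℂ) else 1) * ψ (Function.update s a (!(s a))) := by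
  rw [← Matrix.mulVec_mulVec, Zcyc, Matrix.mulVec_diagonal, aux_Xcyc_mulVec]

lemma aux_XZ_mulVec {M : ℕ} [NeZero M] (T : Finset (ZMod M)) (a : ZMod M)
    (ψ : (ZMod M → Bool) → ℂ) (s : ZMod M → Bool) :
    (Xcyc a * Zcyc T).mulVec ψ s =
      (∏ j ∈ T, if (Function.update s a (!(s a))) j then (-1:ℂ) else 1) *
        ψ (Function.update s a (!(s a))) := by
  rw [← Matrix.mulVec_mulVec, aux_Xcyc_mulVec, Zcyc, Matrix.mulVec_diagonal]

lemma aux_key (N M : ℕ) [NeZero M] (hNM : N + 1 < M) (ψ : (ZMod M → Bool) → ℂ)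
    (s : ZMod M → Bool) (c : Bool → ℂ)
    (hc : ∀ a : ZMod M, ψ (Function.update s a (!(s a))) = c (s a)) :
    (HAper M N).mulVec ψ s = 0 := by
  classical
  set ε : ZMod M → ℂ := fun a => if s a then -1 else 1 with hε
  set G : ZMod M → ℂ := fun j => ∏ i : Fin N, ε (j + ((i:ℕ) : ZMod M)) with hG
  have hinj : ∀ j : ZMod M, ∀ x ∈ (Finset.univ : Finset (Fin N)),
      ∀ y ∈ (Finset.univ : Finset (Fin N)),
      (j + ((x:ℕ) : ZMod M) = j + ((y:ℕ) : ZMod M)) → x = y := by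
    intro j x _ y _ h
    have h2 : ((x:ℕ) : ZMod M) = ((y:ℕ) : ZMod M) := by
      exact add_left_cancel h
    have hx : (((x:ℕ) : ZMod M)).val = (x:ℕ) := ZMod.val_cast_of_lt (by omega)
    have hy : (((y:ℕ) : ZMod M)).val = (y:ℕ) := ZMod.val_cast_of_lt (by omega)
    apply Fin.ext
    rw [← hx, ← hy, h2]
  have himg : ∀ (j : ZMod M) (u : ZMod M → Bool),
      (∏ x ∈ Finset.image (fun i : Fin N => j + ((i:ℕ) : ZMod M)) Finset.univ,
        if u x then (-1:ℂ) else 1)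
      = ∏ i : Fin N, (if u (j + ((i:ℕ) : ZMod M)) then (-1:ℂ) else 1) := by
    intro j u
    exact Finset.prod_image (hinj j)
  -- step: expand
  have hexp : (HAper M N).mulVec ψ s
      = ∑ j : ZMod M, (G j * c (s (j + (N : ZMod M))) - G (j+1) * c (s j)) := by
    rw [HAper, aux_sum_mulVec]
    refine Finset.sum_congr rfl fun j _ => ?_
    rw [Matrix.sub_mulVec, Pi.sub_apply, aux_ZX_mulVec, aux_XZ_mulVec]
    congr 1
    · rw [himg, hc]
    · -- second term
      have himgset : Finset.image (fun i : Fin N => j + ((i:ℕ) : ZMod M) + 1) Finset.univ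
          = Finset.image (fun i : Fin N => (j+1) + ((i:ℕ) : ZMod M)) Finset.univ := by
        apply Finset.image_congr
        intro i _
        ring
      rw [himgset, himg, hc]
      congr 1
      rw [hG]
      refine Finset.prod_congr rfl fun i _ => ?_
      have hne : (j+1) + ((i:ℕ) : ZMod M) ≠ j := by
        intro h
        have : (((i:ℕ) + 1 : ℕ) : ZMod M) = 0 := by
          push_cast
          linear_combination h
        rw [ZMod.natCast_eq_zero_iff] at this
        have := Nat.le_of_dvd (by omega) this
        omega
      rw [Function.update_of_ne hne]
  rw [hexp]
  set α : ℂ := (c true + c false) / 2 with hα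
  set β : ℂ := (c false - c true) / 2 with hβ
  have hcs : ∀ a : ZMod M, c (s a) = α + β * ε a := by
    intro a
    cases hsa : s a <;> simp [hε, hsa, hα, hβ] <;> ring
  have hGε : ∀ j : ZMod M, G j * ε (j + (N : ZMod M)) = ε j * G (j+1) := by
    intro j
    have h1 : G j * ε (j + (N : ZMod M)) = ∏ i : Fin (N+1), ε (j + ((i:ℕ) : ZMod M)) := by
      rw [Fin.prod_univ_castSucc]
      simp [hG, Fin.coe_castSucc, Fin.val_last]
    have h2 : ∏ i : Fin (N+1), ε (j + ((i:ℕ) : ZMod M)) = ε j * G (j+1) := by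
      rw [Fin.prod_univ_succ]
      congr 1
      · norm_num
      · rw [hG]
        refine Finset.prod_congr rfl fun i _ => ?_
        congr 1
        rw [Fin.val_succ]
        push_cast
        ring
    rw [h1]
    exact h2
  have hterm : ∀ j : ZMod M,
      G j * c (s (j + (N : ZMod M))) - G (j+1) * c (s j)
        = α * (G j - G (j+1)) := by
    intro j
    rw [hcs, hcs]
    have := hGε j
    ring_nf
    ring_nf at this
    linear_combination β * this
  rw [Finset.sum_congr rfl fun j _ => hterm j, ← Finset.mul_sum]
  have : ∑ j : ZMod M, (G j - G (j+1)) = 0 := by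
    rw [Finset.sum_sub_distrib]
    have : ∑ j : ZMod M, G (j+1) = ∑ j : ZMod M, G j :=
      Fintype.sum_equiv (Equiv.addRight (1 : ZMod M)) _ _ (fun j => rfl)
    rw [this, sub_self]
  rw [this, mul_zero]


/-- for every `N ≥ 1` and `M ≥ N+2`, every product state `v^{⊗M}` is a
null vector of the periodic anti-symmetric Hamiltonian `H_A^{(N)}`, and consequently
every Dicke state `|D_n^{(M)}⟩` (for `0 ≤ n ≤ M`) is a null vector as well. -/
theorem stmt18 (N M : ℕ) [NeZero M] (hN : 1 ≤ N) (hM : N + 2 ≤ M) :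
    (∀ v : Bool → ℂ, (HAper M N).mulVec (prodState M v) = 0) ∧
    (∀ n : ℕ, n ≤ M → (HAper M N).mulVec (dicke M n) = 0) := by
  classical
  constructor
  · intro v
    funext s
    show (HAper M N).mulVec (prodState M v) s = 0
    set K := (Finset.univ.filter (fun a : ZMod M => s a = true)).card with hK
    have hMcard : (Finset.univ : Finset (ZMod M)).card = M := by
      simp [Finset.card_univ, ZMod.card]
    have htot : K + (Finset.univ.filter (fun x : ZMod M => s x = false)).card = M := by
      have h0 := Finset.card_filter_add_card_filter_not
        (s := (Finset.univ : Finset (ZMod M))) (p := fun x : ZMod M => s x = true)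
      have hneg : Finset.univ.filter (fun x : ZMod M => ¬ (s x = true))
          = Finset.univ.filter (fun x : ZMod M => s x = false) := by
        apply Finset.filter_congr
        intro x _
        simp [Bool.not_eq_true]
      rw [hneg, hMcard] at h0
      rw [hK]
      exact h0
    refine aux_key N M (by omega) _ s
      (fun b => v (!b) * (v true ^ (K - if b then 1 else 0) *
        v false ^ ((M - K) - if b then 0 else 1))) ?_
    intro a
    have hsplit : prodState M v (Function.update s a (!(s a)))
        = v (!(s a)) * ∏ x ∈ Finset.univ.erase a, v (s x) := by
      rw [prodState, ← Finset.mul_prod_erase _ _ (Finset.mem_univ a)]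
      congr 1
      · rw [Function.update_self]
      · refine Finset.prod_congr rfl fun x hx => ?_
        rw [Function.update_of_ne (Finset.ne_of_mem_erase hx)]
    have hT : ∀ T : Finset (ZMod M), ∏ x ∈ T, v (s x)
        = v true ^ (T.filter (fun x => s x = true)).card
          * v false ^ (T.filter (fun x => s x = false)).card := by
      intro T
      rw [← Finset.prod_filter_mul_prod_filter_not T (fun x => s x = true)]
      congr 1
      · rw [Finset.prod_congr rfl (fun x hx => by rw [(Finset.mem_filter.1 hx).2]),
          Finset.prod_const]
      · have hset : T.filter (fun x => ¬ (s x = true)) = T.filter (fun x => s x = false) := by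
          apply Finset.filter_congr
          intro x _
          simp [Bool.not_eq_true]
        rw [hset, Finset.prod_congr rfl (fun x hx => by rw [(Finset.mem_filter.1 hx).2]),
          Finset.prod_const]
    rw [hsplit, hT]
    rw [Finset.filter_erase (fun x => s x = true) a Finset.univ,
      Finset.filter_erase (fun x => s x = false) a Finset.univ]
    cases hsa : s a
    · have c1 : ((Finset.univ.filter (fun x : ZMod M => s x = true)).erase a).card = K := by
        rw [Finset.erase_eq_of_notMem (by simp [hsa])]
      have c0 : ((Finset.univ.filter (fun x : ZMod M => s x = false)).erase a).card
          = (M - K) - 1 := by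
        rw [Finset.card_erase_of_mem (by simp [hsa])]
        omega
      simp [hsa, c1, c0, ← hK]
    · have c1 : ((Finset.univ.filter (fun x : ZMod M => s x = true)).erase a).card
          = K - 1 := by
        rw [Finset.card_erase_of_mem (by simp [hsa])]
      have c0 : ((Finset.univ.filter (fun x : ZMod M => s x = false)).erase a).card
          = M - K := by
        rw [Finset.erase_eq_of_notMem (by simp [hsa])]
        omega
      have hc0' : (Finset.univ.filter (fun x : ZMod M => s x = false)).card = M - K := by
        omega
      simp [hsa, c1, c0, hc0']
  · intro n hn
    funext s
    show (HAper M N).mulVec (dicke M n) s = 0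
    set K := (Finset.univ.filter (fun a : ZMod M => s a = true)).card with hK
    refine aux_key N M (by omega) _ s
      (fun b => if (if b then K - 1 else K + 1) = n then (1:ℂ) else 0) ?_
    intro a
    cases hsa : s a
    · have hset : Finset.univ.filter
          (fun x : ZMod M => (Function.update s a true) x = true)
          = insert a (Finset.univ.filter (fun x : ZMod M => s x = true)) := by
        ext x
        rcases eq_or_ne x a with rfl | hx
        · simp [Function.update_self]
        · simp [Function.update_of_ne hx, hx]
      simp only [dicke, Bool.not_false]
      rw [hset, Finset.card_insert_of_notMem (by simp [hsa])]
      simp [hK]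
    · have hset : Finset.univ.filter
          (fun x : ZMod M => (Function.update s a false) x = true)
          = (Finset.univ.filter (fun x : ZMod M => s x = true)).erase a := by
        ext x
        rcases eq_or_ne x a with rfl | hx
        · simp [Function.update_self]
        · simp [Function.update_of_ne hx, hx]
      simp only [dicke, Bool.not_true]
      rw [hset, Finset.card_erase_of_mem (by simp [hsa])]
      simp [hK]

end
end

section
/- Let M ≥ 5 and consider the periodic anti-symmetric free-fermions-in-disguise Hamiltonian H_A = Σ_{j=1}^M ( Z_j Z_{j+1} X_{j+2} − X_j Z_{j+1} Z_{j+2} ) on (ℂ²)^{⊗M} with indices mod M. For every n ≥ 1 such that configurations exist, the constrained Dicke state |Ψ_n⟩ = Σ |a_1, …, a_n⟩, where the sum runs over all n-element subsets {a_1 < a_2 < ⋯ < a_n} of ℤ/Mℤ whose consecutive cyclic gaps all exceed 2 (i.e. a_{j+1} − a_j ≥ 3 for j = 1,…,n−1 and a_1 + M − a_n ≥ 3), satisfies H_A |Ψ_n⟩ = 0. -/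
noncomputable section

/-- The periodic anti-symmetric free-fermions-in-disguise Hamiltonian
`H_A = Σ_{j=1}^M (Z_j Z_{j+1} X_{j+2} − X_j Z_{j+1} Z_{j+2})`,
with all site indices taken modulo `M`. -/
def HAffd (M : ℕ) [NeZero M] : Matrix (ZMod M → Bool) (ZMod M → Bool) ℂ :=
  ∑ j : ZMod M,
    (Zcyc ({j, j + 1} : Finset (ZMod M)) * Xcyc (j + 2) -
      Xcyc j * Zcyc ({j + 1, j + 2} : Finset (ZMod M)))

/-- A subset `T ⊆ ℤ/Mℤ` of down-spin positions is admissible iff all its cyclic gaps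
exceed `2`: no two (distinct) elements differ by `1` or `2` modulo `M`. -/
def gapped {M : ℕ} (T : Finset (ZMod M)) : Prop :=
  ∀ a ∈ T, ∀ b ∈ T, a - b ≠ 1 ∧ a - b ≠ 2

instance {M : ℕ} (T : Finset (ZMod M)) : Decidable (gapped T) := by
  unfold gapped; infer_instance

/-- The constrained Dicke state `|Ψ_n⟩ = Σ |a_1, …, a_n⟩`: the sum of all
computational basis states whose `n` down spins have all cyclic gaps exceeding `2`. -/
def constrainedDicke (M : ℕ) [NeZero M] (n : ℕ) : (ZMod M → Bool) → ℂ :=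
  fun s =>
    if (Finset.univ.filter (fun a : ZMod M => s a = true)).card = n ∧
        gapped (Finset.univ.filter (fun a : ZMod M => s a = true)) then 1 else 0

set_option linter.unusedSectionVars false
set_option linter.unreachableTactic false
set_option linter.unusedTactic false
set_option linter.unusedVariables false

namespace Stmt19

variable {M : ℕ} [NeZero M]

/-- flip the bit at site `a` -/
def flip (s : ZMod M → Bool) (a : ZMod M) : ZMod M → Bool :=
  Function.update s a (!(s a))

lemma flip_apply (s : ZMod M → Bool) (a b : ZMod M) :
    flip s a b = if b = a then !(s a) else s b :=
  Function.update_apply s a (!(s a)) b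

lemma flip_self (s : ZMod M → Bool) (a : ZMod M) : flip s a a = !(s a) := by
  simp [flip_apply]

lemma flip_ne (s : ZMod M → Bool) {a b : ZMod M} (h : b ≠ a) : flip s a b = s b := by
  simp [flip_apply, h]

lemma flip_flip (s : ZMod M → Bool) (a : ZMod M) : flip (flip s a) a = s := by
  funext b
  rcases eq_or_ne b a with rfl | h
  · simp [flip_self]
  · simp [flip_ne _ h]

lemma Xcyc_apply (a : ZMod M) (s t : ZMod M → Bool) :
    Xcyc a s t = if t = flip s a then 1 else 0 := by
  unfold Xcyc
  congr 1
  simp only [eq_iff_iff]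
  constructor
  · rintro rfl
    exact (flip_flip t a).symm
  · rintro rfl
    exact (flip_flip s a).symm

def sgn (s : ZMod M → Bool) (a : ZMod M) : ℂ := if s a then -1 else 1

def coef (s : ZMod M → Bool) (j : ZMod M) : ℂ :=
  sgn s (j - 2) * sgn s (j - 1) - sgn s (j + 1) * sgn s (j + 2)

lemma natCast_ne (hM : 5 ≤ M) {c : ℕ} (h0 : c ≠ 0) (h5 : c < 5) : ((c : ℕ) : ZMod M) ≠ 0 := by
  intro h
  rw [ZMod.natCast_eq_zero_iff] at h
  have := Nat.le_of_dvd (Nat.pos_of_ne_zero h0) h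
  omega

lemma one_ne (hM : 5 ≤ M) : (1 : ZMod M) ≠ 0 := by
  simpa using natCast_ne hM (c := 1) one_ne_zero (by norm_num)

lemma two_ne (hM : 5 ≤ M) : (2 : ZMod M) ≠ 0 := by
  simpa using natCast_ne hM (c := 2) (by norm_num) (by norm_num)

lemma three_ne (hM : 5 ≤ M) : (3 : ZMod M) ≠ 0 := by
  simpa using natCast_ne hM (c := 3) (by norm_num) (by norm_num)

lemma four_ne (hM : 5 ≤ M) : (4 : ZMod M) ≠ 0 := by
  simpa using natCast_ne hM (c := 4) (by norm_num) (by norm_num)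

lemma sum_flip (a : ZMod M) (s : ZMod M → Bool) (c : (ZMod M → Bool) → ℂ) :
    ∑ t : ZMod M → Bool, Xcyc a s t * c t = c (flip s a) := by
  have : ∀ t : ZMod M → Bool, Xcyc a s t * c t = if t = flip s a then c t else 0 := by
    intro t
    rw [Xcyc_apply, ite_mul, one_mul, zero_mul]
  rw [Finset.sum_congr rfl fun t _ => this t]
  simp

lemma mulVec_eq (n : ℕ) (hM : 5 ≤ M) (s : ZMod M → Bool) :
    (HAffd M).mulVec (constrainedDicke M n) s =
      ∑ j : ZMod M, coef s j * constrainedDicke M n (flip s j) := by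
  have h1 : (1 : ZMod M) ≠ 0 := one_ne hM
  have h2 : (2 : ZMod M) ≠ 0 := two_ne hM
  set ψ := constrainedDicke M n with hψ
  have entry : ∀ t, HAffd M s t = ∑ j : ZMod M,
      ((∏ x ∈ ({j, j+1} : Finset (ZMod M)), (if s x then (-1:ℂ) else 1)) * Xcyc (j+2) s t
        - Xcyc j s t * ∏ x ∈ ({j+1, j+2} : Finset (ZMod M)), (if t x then (-1:ℂ) else 1)) := by
    intro t
    unfold HAffd
    rw [Matrix.sum_apply]
    refine Finset.sum_congr rfl fun j _ => ?_
    rw [Matrix.sub_apply]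
    unfold Zcyc
    rw [Matrix.diagonal_mul, Matrix.mul_diagonal]
  have hmv : (HAffd M).mulVec ψ s = ∑ t : ZMod M → Bool, HAffd M s t * ψ t := rfl
  have step1 : (HAffd M).mulVec ψ s =
      ∑ j : ZMod M, (sgn s j * sgn s (j+1) * ψ (flip s (j+2))
        - sgn s (j+1) * sgn s (j+2) * ψ (flip s j)) := by
    rw [hmv]
    rw [Finset.sum_congr rfl fun t _ => by rw [entry t, Finset.sum_mul]]
    rw [Finset.sum_comm]
    refine Finset.sum_congr rfl fun j _ => ?_
    have hp1 : (∏ x ∈ ({j, j+1} : Finset (ZMod M)), (if s x then (-1:ℂ) else 1))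
        = sgn s j * sgn s (j+1) := by
      rw [Finset.prod_pair (by intro h; exact h1 (by linear_combination -h))]
      rfl
    have hp2 : ∀ t : ZMod M → Bool,
        (∏ x ∈ ({j+1, j+2} : Finset (ZMod M)), (if t x then (-1:ℂ) else 1))
        = sgn t (j+1) * sgn t (j+2) := by
      intro t
      rw [Finset.prod_pair (by intro h; exact h1 (by linear_combination -h))]
      rfl
    calc ∑ t : ZMod M → Bool,
          ((∏ x ∈ ({j, j+1} : Finset (ZMod M)), (if s x then (-1:ℂ) else 1)) * Xcyc (j+2) s t
            - Xcyc j s t * ∏ x ∈ ({j+1, j+2} : Finset (ZMod M)), (if t x then (-1:ℂ) else 1)) * ψ t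
        = ∑ t : ZMod M → Bool,
          ((sgn s j * sgn s (j+1)) * (Xcyc (j+2) s t * ψ t)
            - Xcyc j s t * ((sgn t (j+1) * sgn t (j+2)) * ψ t)) := by
          refine Finset.sum_congr rfl fun t _ => ?_
          rw [hp1, hp2]; ring
      _ = (sgn s j * sgn s (j+1)) * (∑ t : ZMod M → Bool, Xcyc (j+2) s t * ψ t)
            - ∑ t : ZMod M → Bool, Xcyc j s t * ((sgn t (j+1) * sgn t (j+2)) * ψ t) := by
          rw [Finset.sum_sub_distrib, Finset.mul_sum]
      _ = sgn s j * sgn s (j+1) * ψ (flip s (j+2))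
            - sgn s (j+1) * sgn s (j+2) * ψ (flip s j) := by
          rw [sum_flip, sum_flip (c := fun t => (sgn t (j+1) * sgn t (j+2)) * ψ t)]
          have n1 : sgn (flip s j) (j+1) = sgn s (j+1) := by
            unfold sgn
            rw [flip_ne s (by intro h; exact h1 (by linear_combination h))]
          have n2 : sgn (flip s j) (j+2) = sgn s (j+2) := by
            unfold sgn
            rw [flip_ne s (by intro h; exact h2 (by linear_combination h))]
          rw [n1, n2]
  rw [step1, Finset.sum_sub_distrib]
  have reindex : ∑ j : ZMod M, sgn s j * sgn s (j+1) * ψ (flip s (j+2))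
      = ∑ j : ZMod M, sgn s (j-2) * sgn s (j-1) * ψ (flip s j) := by
    refine Fintype.sum_equiv (Equiv.addRight (2 : ZMod M))
      (fun j => sgn s j * sgn s (j+1) * ψ (flip s (j+2)))
      (fun j => sgn s (j-2) * sgn s (j-1) * ψ (flip s j)) fun x => ?_
    simp only [Equiv.coe_addRight]
    have e1 : x + 2 - 2 = x := by ring
    have e2 : x + 2 - 1 = x + 1 := by ring
    rw [e1, e2]
  rw [reindex, ← Finset.sum_sub_distrib]
  refine Finset.sum_congr rfl fun j _ => ?_
  unfold coef
  ring


/-- the candidate partner site -/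
def nbr (s : ZMod M → Bool) (j : ZMod M) : ZMod M :=
  if s (j+1) then j+1 else if s (j+2) then j+2 else if s (j-1) then j-1 else j-2

lemma dicke_ne {n : ℕ} {t : ZMod M → Bool} (h : constrainedDicke M n t ≠ 0) :
    (Finset.univ.filter (fun a : ZMod M => t a = true)).card = n ∧
      gapped (Finset.univ.filter (fun a : ZMod M => t a = true)) ∧
      constrainedDicke M n t = 1 := by
  unfold constrainedDicke at h ⊢
  by_cases hc : (Finset.univ.filter (fun a : ZMod M => t a = true)).card = n ∧
      gapped (Finset.univ.filter (fun a : ZMod M => t a = true))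
  · exact ⟨hc.1, hc.2, if_pos hc⟩
  · rw [if_neg hc] at h
    exact absurd rfl h

lemma dicke_eq_one {n : ℕ} {t : ZMod M → Bool}
    (h1 : (Finset.univ.filter (fun a : ZMod M => t a = true)).card = n)
    (h2 : gapped (Finset.univ.filter (fun a : ZMod M => t a = true))) :
    constrainedDicke M n t = 1 := by
  unfold constrainedDicke
  exact if_pos ⟨h1, h2⟩

lemma supp_flip_true {s : ZMod M → Bool} {j : ZMod M} (h : s j = true) :
    (Finset.univ.filter (fun a : ZMod M => flip s j a = true))
      = (Finset.univ.filter (fun a : ZMod M => s a = true)).erase j := by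
  ext a
  simp only [Finset.mem_filter, Finset.mem_erase, Finset.mem_univ, true_and]
  rw [flip_apply]
  rcases eq_or_ne a j with rfl | hne
  · simp [h]
  · simp [hne]

lemma supp_flip_false {s : ZMod M → Bool} {j : ZMod M} (h : s j = false) :
    (Finset.univ.filter (fun a : ZMod M => flip s j a = true))
      = insert j (Finset.univ.filter (fun a : ZMod M => s a = true)) := by
  ext a
  simp only [Finset.mem_filter, Finset.mem_insert, Finset.mem_univ, true_and]
  rw [flip_apply]
  rcases eq_or_ne a j with rfl | hne
  · simp [h]
  · simp [hne]

lemma four_bools_aux (b1 b2 b3 b4 : Bool)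
    (hc : ((if b4 then (-1:ℂ) else 1) * (if b3 then (-1:ℂ) else 1)
      - (if b1 then (-1:ℂ) else 1) * (if b2 then (-1:ℂ) else 1)) ≠ 0)
    (h12 : ¬(b1 = true ∧ b2 = true))
    (h34 : ¬(b3 = true ∧ b4 = true)) :
    (b1 = true ∧ b2 = false ∧ b3 = false ∧ b4 = false) ∨
    (b1 = false ∧ b2 = true ∧ b3 = false ∧ b4 = false) ∨
    (b1 = false ∧ b2 = false ∧ b3 = true ∧ b4 = false) ∨
    (b1 = false ∧ b2 = false ∧ b3 = false ∧ b4 = true) := by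
  cases b1 <;> cases b2 <;> cases b3 <;> cases b4 <;> simp_all <;> norm_num at hc

lemma four_bools {s : ZMod M → Bool} {j : ZMod M} (hc : coef s j ≠ 0)
    (h12 : ¬(s (j+1) = true ∧ s (j+2) = true))
    (h34 : ¬(s (j-1) = true ∧ s (j-2) = true)) :
    (s (j+1) = true ∧ s (j+2) = false ∧ s (j-1) = false ∧ s (j-2) = false) ∨
    (s (j+1) = false ∧ s (j+2) = true ∧ s (j-1) = false ∧ s (j-2) = false) ∨
    (s (j+1) = false ∧ s (j+2) = false ∧ s (j-1) = true ∧ s (j-2) = false) ∨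
    (s (j+1) = false ∧ s (j+2) = false ∧ s (j-1) = false ∧ s (j-2) = true) := by
  unfold coef sgn at hc
  exact four_bools_aux _ _ _ _ hc h12 h34

lemma gapped_erase (hM : 5 ≤ M) {s : ZMod M → Bool} {j k : ZMod M}
    (hgapT : gapped ((Finset.univ.filter fun a : ZMod M => s a = true).erase j))
    (hp1 : j + 1 = k ∨ s (j+1) = false) (hp2 : j + 2 = k ∨ s (j+2) = false)
    (hm1 : j - 1 = k ∨ s (j-1) = false) (hm2 : j - 2 = k ∨ s (j-2) = false) :
    gapped ((Finset.univ.filter fun a : ZMod M => s a = true).erase k) := by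
  have h1 : (1 : ZMod M) ≠ 0 := one_ne hM
  have h2 : (2 : ZMod M) ≠ 0 := two_ne hM
  intro a ha b hb
  rw [Finset.mem_erase, Finset.mem_filter] at ha hb
  obtain ⟨hak, -, hsa⟩ := ha
  obtain ⟨hbk, -, hsb⟩ := hb
  by_cases haj : a = j
  · by_cases hbj : b = j
    · constructor <;> intro h
      · exact h1 (by linear_combination haj - hbj - h)
      · exact h2 (by linear_combination haj - hbj - h)
    · constructor <;> intro h
      · have hb' : b = j - 1 := by linear_combination haj - h
        rcases hm1 with hk | hf
        · exact hbk (hb'.trans hk)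
        · rw [hb'] at hsb; rw [hf] at hsb; simp at hsb
      · have hb' : b = j - 2 := by linear_combination haj - h
        rcases hm2 with hk | hf
        · exact hbk (hb'.trans hk)
        · rw [hb'] at hsb; rw [hf] at hsb; simp at hsb
  · by_cases hbj : b = j
    · constructor <;> intro h
      · have ha' : a = j + 1 := by linear_combination hbj + h
        rcases hp1 with hk | hf
        · exact hak (ha'.trans hk)
        · rw [ha'] at hsa; rw [hf] at hsa; simp at hsa
      · have ha' : a = j + 2 := by linear_combination hbj + h
        rcases hp2 with hk | hf
        · exact hak (ha'.trans hk)
        · rw [ha'] at hsa; rw [hf] at hsa; simp at hsa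
    · exact hgapT a (Finset.mem_erase.2 ⟨haj, Finset.mem_filter.2 ⟨Finset.mem_univ _, hsa⟩⟩)
        b (Finset.mem_erase.2 ⟨hbj, Finset.mem_filter.2 ⟨Finset.mem_univ _, hsb⟩⟩)

lemma crux (hM : 5 ≤ M) {n : ℕ} {s : ZMod M → Bool} {j : ZMod M}
    (hf : coef s j * constrainedDicke M n (flip s j) ≠ 0) :
    constrainedDicke M n (flip s j) = 1 ∧
    constrainedDicke M n (flip s (nbr s j)) = 1 ∧
    coef s (nbr s j) = - coef s j ∧
    nbr s (nbr s j) = j ∧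
    nbr s j ≠ j := by
  have h1 : (1 : ZMod M) ≠ 0 := one_ne hM
  have h2 : (2 : ZMod M) ≠ 0 := two_ne hM
  have h3 : (3 : ZMod M) ≠ 0 := three_ne hM
  have h4 : (4 : ZMod M) ≠ 0 := four_ne hM
  have hc : coef s j ≠ 0 := fun h => hf (by rw [h, zero_mul])
  have hψ : constrainedDicke M n (flip s j) ≠ 0 := fun h => hf (by rw [h, mul_zero])
  obtain ⟨hcard, hgap, hone⟩ := dicke_ne hψ
  -- s j must be true
  have hsj : s j = true := by
    by_contra hsj'
    have hsj0 : s j = false := by simpa using hsj'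
    rw [supp_flip_false hsj0] at hgap
    have hj : j ∈ insert j (Finset.univ.filter fun a : ZMod M => s a = true) :=
      Finset.mem_insert_self _ _
    have hmem : ∀ a : ZMod M, s a = true →
        a ∈ insert j (Finset.univ.filter fun a : ZMod M => s a = true) := fun a ha =>
      Finset.mem_insert_of_mem (Finset.mem_filter.2 ⟨Finset.mem_univ _, ha⟩)
    have e1 : s (j+1) = false := by
      cases e : s (j+1)
      · rfl
      · exact absurd (by ring : j + 1 - j = (1 : ZMod M)) (hgap _ (hmem _ e) _ hj).1
    have e2 : s (j+2) = false := by
      cases e : s (j+2)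
      · rfl
      · exact absurd (by ring : j + 2 - j = (2 : ZMod M)) (hgap _ (hmem _ e) _ hj).2
    have e3 : s (j-1) = false := by
      cases e : s (j-1)
      · rfl
      · exact absurd (by ring : j - (j - 1) = (1 : ZMod M)) (hgap _ hj _ (hmem _ e)).1
    have e4 : s (j-2) = false := by
      cases e : s (j-2)
      · rfl
      · exact absurd (by ring : j - (j - 2) = (2 : ZMod M)) (hgap _ hj _ (hmem _ e)).2
    exact hc (by simp [coef, sgn, e1, e2, e3, e4])
  rw [supp_flip_true hsj] at hcard hgap
  have hjS : j ∈ (Finset.univ.filter fun a : ZMod M => s a = true) :=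
    Finset.mem_filter.2 ⟨Finset.mem_univ _, hsj⟩
  have hScard : (Finset.univ.filter fun a : ZMod M => s a = true).card = n + 1 := by
    have he := Finset.card_erase_of_mem hjS
    have hpos := Finset.card_pos.2 ⟨j, hjS⟩
    omega
  have hpair : ∀ a b : ZMod M, a ≠ j → b ≠ j → s a = true → s b = true →
      a - b ≠ 1 ∧ a - b ≠ 2 := fun a b ha hb hsa hsb =>
    hgap a (Finset.mem_erase.2 ⟨ha, Finset.mem_filter.2 ⟨Finset.mem_univ _, hsa⟩⟩)
      b (Finset.mem_erase.2 ⟨hb, Finset.mem_filter.2 ⟨Finset.mem_univ _, hsb⟩⟩)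
  have np1 : j + 1 ≠ j := fun h => h1 (by linear_combination h)
  have np2 : j + 2 ≠ j := fun h => h2 (by linear_combination h)
  have np3 : j + 3 ≠ j := fun h => h3 (by linear_combination h)
  have np4 : j + 4 ≠ j := fun h => h4 (by linear_combination h)
  have nm1 : j - 1 ≠ j := fun h => h1 (by linear_combination -h)
  have nm2 : j - 2 ≠ j := fun h => h2 (by linear_combination -h)
  have nm3 : j - 3 ≠ j := fun h => h3 (by linear_combination -h)
  have nm4 : j - 4 ≠ j := fun h => h4 (by linear_combination -h)
  have hb12 : ¬(s (j+1) = true ∧ s (j+2) = true) := fun ⟨x, y⟩ =>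
    (hpair _ _ np2 np1 y x).1 (by ring)
  have hb34 : ¬(s (j-1) = true ∧ s (j-2) = true) := fun ⟨x, y⟩ =>
    (hpair _ _ nm1 nm2 x y).1 (by ring)
  have hcardk : ∀ k : ZMod M, s k = true →
      ((Finset.univ.filter fun a : ZMod M => s a = true).erase k).card = n := by
    intro k hk
    have hm : k ∈ (Finset.univ.filter fun a : ZMod M => s a = true) :=
      Finset.mem_filter.2 ⟨Finset.mem_univ k, hk⟩
    rw [Finset.card_erase_of_mem hm, hScard]
    omega
  rcases four_bools hc hb12 hb34 with ⟨b1, b2, b3, b4⟩ | ⟨b1, b2, b3, b4⟩ |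
    ⟨b1, b2, b3, b4⟩ | ⟨b1, b2, b3, b4⟩
  -- Case k = j+1
  · have hx3 : s (j+3) = false := by
      cases e : s (j+3)
      · rfl
      · exact absurd (by ring : j + 3 - (j + 1) = (2 : ZMod M)) (hpair _ _ np3 np1 e b1).2
    have hk : nbr s j = j + 1 := by simp [nbr, b1]
    have r1 : j + 1 + 1 = j + 2 := by ring
    have r2 : j + 1 + 2 = j + 3 := by ring
    have r3 : j + 1 - 1 = j := by ring
    have r4 : j + 1 - 2 = j - 1 := by ring
    have hknbr : nbr s (j + 1) = j := by
      unfold nbr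
      rw [r1, r2, r3, b2, hx3, hsj]
      simp
    have hgapk : gapped ((Finset.univ.filter fun a : ZMod M => s a = true).erase (j+1)) :=
      gapped_erase hM hgap (Or.inl rfl) (Or.inr b2) (Or.inr b3) (Or.inr b4)
    refine ⟨hone, ?_, ?_, ?_, ?_⟩
    · rw [hk, dicke_eq_one ?_ ?_]
      · rw [supp_flip_true b1]; exact hcardk _ b1
      · rw [supp_flip_true b1]; exact hgapk
    · rw [hk]
      unfold coef
      rw [show (j:ZMod M) + 1 - 2 = j - 1 from r4, show (j:ZMod M) + 1 - 1 = j from r3,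
        r1, r2]
      simp [sgn, b1, b2, b3, b4, hsj, hx3]
      try ring
    · rw [hk, hknbr]
    · rw [hk]; exact np1
  -- Case k = j+2
  · have hx3 : s (j+3) = false := by
      cases e : s (j+3)
      · rfl
      · exact absurd (by ring : j + 3 - (j + 2) = (1 : ZMod M)) (hpair _ _ np3 np2 e b2).1
    have hx4 : s (j+4) = false := by
      cases e : s (j+4)
      · rfl
      · exact absurd (by ring : j + 4 - (j + 2) = (2 : ZMod M)) (hpair _ _ np4 np2 e b2).2
    have hk : nbr s j = j + 2 := by simp [nbr, b1, b2]
    have r1 : j + 2 + 1 = j + 3 := by ring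
    have r2 : j + 2 + 2 = j + 4 := by ring
    have r3 : j + 2 - 1 = j + 1 := by ring
    have r4 : j + 2 - 2 = j := by ring
    have hknbr : nbr s (j + 2) = j := by
      unfold nbr
      rw [r1, r2, r3, r4, hx3, hx4, b1]
      simp
    have hgapk : gapped ((Finset.univ.filter fun a : ZMod M => s a = true).erase (j+2)) :=
      gapped_erase hM hgap (Or.inr b1) (Or.inl rfl) (Or.inr b3) (Or.inr b4)
    refine ⟨hone, ?_, ?_, ?_, ?_⟩
    · rw [hk, dicke_eq_one ?_ ?_]
      · rw [supp_flip_true b2]; exact hcardk _ b2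
      · rw [supp_flip_true b2]; exact hgapk
    · rw [hk]
      unfold coef
      rw [r1, r2, r3, r4]
      simp [sgn, b1, b2, b3, b4, hsj, hx3, hx4]
      try ring
    · rw [hk, hknbr]
    · rw [hk]; exact np2
  -- Case k = j-1
  · have hx3 : s (j-3) = false := by
      cases e : s (j-3)
      · rfl
      · exact absurd (by ring : j - 1 - (j - 3) = (2 : ZMod M)) (hpair _ _ nm1 nm3 b3 e).2
    have hk : nbr s j = j - 1 := by simp [nbr, b1, b2, b3]
    have r1 : j - 1 + 1 = j := by ring
    have r2 : j - 1 + 2 = j + 1 := by ring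
    have r3 : j - 1 - 1 = j - 2 := by ring
    have r4 : j - 1 - 2 = j - 3 := by ring
    have hknbr : nbr s (j - 1) = j := by
      unfold nbr
      rw [r1, hsj]
      simp
    have hgapk : gapped ((Finset.univ.filter fun a : ZMod M => s a = true).erase (j-1)) :=
      gapped_erase hM hgap (Or.inr b1) (Or.inr b2) (Or.inl rfl) (Or.inr b4)
    refine ⟨hone, ?_, ?_, ?_, ?_⟩
    · rw [hk, dicke_eq_one ?_ ?_]
      · rw [supp_flip_true b3]; exact hcardk _ b3
      · rw [supp_flip_true b3]; exact hgapk
    · rw [hk]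
      unfold coef
      rw [r1, r2, r3, r4]
      simp [sgn, b1, b2, b3, b4, hsj, hx3]
      try ring
    · rw [hk, hknbr]
    · rw [hk]; exact nm1
  -- Case k = j-2
  · have hx3 : s (j-3) = false := by
      cases e : s (j-3)
      · rfl
      · exact absurd (by ring : j - 2 - (j - 3) = (1 : ZMod M)) (hpair _ _ nm2 nm3 b4 e).1
    have hx4 : s (j-4) = false := by
      cases e : s (j-4)
      · rfl
      · exact absurd (by ring : j - 2 - (j - 4) = (2 : ZMod M)) (hpair _ _ nm2 nm4 b4 e).2
    have hk : nbr s j = j - 2 := by simp [nbr, b1, b2, b3]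
    have r1 : j - 2 + 1 = j - 1 := by ring
    have r2 : j - 2 + 2 = j := by ring
    have r3 : j - 2 - 1 = j - 3 := by ring
    have r4 : j - 2 - 2 = j - 4 := by ring
    have hknbr : nbr s (j - 2) = j := by
      unfold nbr
      rw [r1, r2, b3, hsj]
      simp
    have hgapk : gapped ((Finset.univ.filter fun a : ZMod M => s a = true).erase (j-2)) :=
      gapped_erase hM hgap (Or.inr b1) (Or.inr b2) (Or.inr b3) (Or.inl rfl)
    refine ⟨hone, ?_, ?_, ?_, ?_⟩
    · rw [hk, dicke_eq_one ?_ ?_]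
      · rw [supp_flip_true b4]; exact hcardk _ b4
      · rw [supp_flip_true b4]; exact hgapk
    · rw [hk]
      unfold coef
      rw [r1, r2, r3, r4]
      simp [sgn, b1, b2, b3, b4, hsj, hx3, hx4]
      try ring
    · rw [hk, hknbr]
    · rw [hk]; exact nm2

lemma key (hM : 5 ≤ M) (n : ℕ) (s : ZMod M → Bool) :
    ∑ j : ZMod M, coef s j * constrainedDicke M n (flip s j) = 0 := by
  classical
  refine Finset.sum_ninvolution
    (fun j => if coef s j * constrainedDicke M n (flip s j) = 0 then j else nbr s j)
    ?_ ?_ (fun a => Finset.mem_univ _) ?_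
  · intro a
    beta_reduce
    by_cases h : coef s a * constrainedDicke M n (flip s a) = 0
    · rw [if_pos h, h]
      ring
    · obtain ⟨e1, e2, e3, -, -⟩ := crux hM h
      rw [if_neg h, e1, e2, e3]
      ring
  · intro a ha
    obtain ⟨-, -, -, -, hne⟩ := crux hM ha
    beta_reduce
    rw [if_neg ha]
    exact hne
  · intro a
    beta_reduce
    by_cases h : coef s a * constrainedDicke M n (flip s a) = 0
    · rw [if_pos h, if_pos h]
    · obtain ⟨e1, e2, e3, e4, -⟩ := crux hM h
      have hca : coef s a ≠ 0 := fun hz => h (by rw [hz, zero_mul])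
      have hfk : coef s (nbr s a) * constrainedDicke M n (flip s (nbr s a)) ≠ 0 := by
        rw [e2, e3, mul_one]
        simpa using hca
      rw [if_neg h, if_neg hfk]
      exact e4

end Stmt19

/-- for `M ≥ 5` and every `n ≥ 1` such that admissible configurations
exist, the constrained Dicke state `|Ψ_n⟩` is a null vector of the periodic
anti-symmetric free-fermions-in-disguise Hamiltonian `H_A`. -/
theorem stmt19 (M : ℕ) [NeZero M] (hM : 5 ≤ M) (n : ℕ) (hn : 1 ≤ n)
    (hex : ∃ T : Finset (ZMod M), T.card = n ∧ gapped T) :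
    (HAffd M).mulVec (constrainedDicke M n) = 0 := by
  funext s
  rw [Stmt19.mulVec_eq n hM s, Stmt19.key hM n s]
  rfl

end
end
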